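/- arXiv:2512.19140 — 2 statements merged into one kernel-verified Lean document; each statement's English description precedes it below -/
import Mathlib

section
/- In the quiver braid group G, the element g1 commutes with the conjugate g2·g3·g2⁻¹, i.e. g1·(g2g3g2⁻¹) = (g2g3g2⁻¹)·g1. -/
/-- The relators of the quiver braid group `G` on generators `g1, g2, g3`:
`g1g2g1 = g2g1g2`, `g1g3g1 = g3g1g3`, `g2g3g2 = g3g2g3`, and
`g1g2g3g1 = g2g3g1g2`. -/
def quiverRels : Set (FreeGroup (Fin 3)) :=
  { FreeGroup.of 0 * FreeGroup.of 1 * FreeGroup.of 0 *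
      (FreeGroup.of 1 * FreeGroup.of 0 * FreeGroup.of 1)⁻¹,
    FreeGroup.of 0 * FreeGroup.of 2 * FreeGroup.of 0 *
      (FreeGroup.of 2 * FreeGroup.of 0 * FreeGroup.of 2)⁻¹,
    FreeGroup.of 1 * FreeGroup.of 2 * FreeGroup.of 1 *
      (FreeGroup.of 2 * FreeGroup.of 1 * FreeGroup.of 2)⁻¹,
    FreeGroup.of 0 * FreeGroup.of 1 * FreeGroup.of 2 * FreeGroup.of 0 *
      (FreeGroup.of 1 * FreeGroup.of 2 * FreeGroup.of 0 * FreeGroup.of 1)⁻¹ }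

/-- The quiver braid group `G`. -/
abbrev QuiverBraidGroup := PresentedGroup quiverRels

/-- The generators `g1, g2, g3` of `G` (indexed by `0, 1, 2`). -/
def g (i : Fin 3) : QuiverBraidGroup := PresentedGroup.of i

lemma rel_one {r : FreeGroup (Fin 3)} (h : r ∈ quiverRels) :
    PresentedGroup.mk quiverRels r = 1 := by
  exact (QuotientGroup.eq_one_iff r).2 (Subgroup.subset_normalClosure h)

lemma rel1 : g 0 * g 1 * g 0 = g 1 * g 0 * g 1 := by
  have h := rel_one (r := FreeGroup.of 0 * FreeGroup.of 1 * FreeGroup.of 0 *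
      (FreeGroup.of 1 * FreeGroup.of 0 * FreeGroup.of 1)⁻¹)
    (by simp [quiverRels])
  simp only [map_mul, map_inv] at h
  rw [mul_inv_eq_one] at h
  exact h

lemma rel4 : g 0 * g 1 * g 2 * g 0 = g 1 * g 2 * g 0 * g 1 := by
  have h := rel_one (r := FreeGroup.of 0 * FreeGroup.of 1 * FreeGroup.of 2 * FreeGroup.of 0 *
      (FreeGroup.of 1 * FreeGroup.of 2 * FreeGroup.of 0 * FreeGroup.of 1)⁻¹)
    (by simp [quiverRels])
  simp only [map_mul, map_inv] at h
  rw [mul_inv_eq_one] at h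
  exact h

/-- In the quiver braid group `G`, the element `g1` commutes with `g2·g3·g2⁻¹`. -/
theorem stmt_1 :
    g 0 * (g 1 * g 2 * (g 1)⁻¹) = (g 1 * g 2 * (g 1)⁻¹) * g 0 := by
  have h1 : (g 1)⁻¹ * g 0 * g 1 = g 0 * g 1 * (g 0)⁻¹ := by
    calc (g 1)⁻¹ * g 0 * g 1 = (g 1)⁻¹ * (g 0 * g 1 * g 0) * (g 0)⁻¹ := by group
      _ = (g 1)⁻¹ * (g 1 * g 0 * g 1) * (g 0)⁻¹ := by rw [rel1]
      _ = g 0 * g 1 * (g 0)⁻¹ := by group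
  calc g 0 * (g 1 * g 2 * (g 1)⁻¹)
      = g 0 * g 1 * g 2 * g 0 * (g 0)⁻¹ * (g 1)⁻¹ := by group
    _ = g 1 * g 2 * g 0 * g 1 * (g 0)⁻¹ * (g 1)⁻¹ := by rw [rel4]
    _ = g 1 * g 2 * (g 0 * g 1 * (g 0)⁻¹) * (g 1)⁻¹ := by group
    _ = g 1 * g 2 * ((g 1)⁻¹ * g 0 * g 1) * (g 1)⁻¹ := by rw [h1]
    _ = (g 1 * g 2 * (g 1)⁻¹) * g 0 := by group
end

section
/- The assignment g1 ↦ s1, g2 ↦ s2, g3 ↦ s2⁻¹·s3·s2 extends to a group homomorphism from the quiver braid group G to the Artin braid group Br4, and this homomorphism is surjective. -/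
/-- The relators of the Artin braid group `Br₄` on generators `s1, s2, s3`:
`s1s2s1 = s2s1s2`, `s2s3s2 = s3s2s3`, and `s1s3 = s3s1`. -/
def braidRels4 : Set (FreeGroup (Fin 3)) :=
  { FreeGroup.of 0 * FreeGroup.of 1 * FreeGroup.of 0 *
      (FreeGroup.of 1 * FreeGroup.of 0 * FreeGroup.of 1)⁻¹,
    FreeGroup.of 1 * FreeGroup.of 2 * FreeGroup.of 1 *
      (FreeGroup.of 2 * FreeGroup.of 1 * FreeGroup.of 2)⁻¹,
    FreeGroup.of 0 * FreeGroup.of 2 * (FreeGroup.of 2 * FreeGroup.of 0)⁻¹ }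

/-- The Artin braid group `Br₄`. -/
abbrev BraidGroup4 := PresentedGroup braidRels4

/-- The generators `s1, s2, s3` of `Br₄` (indexed by `0, 1, 2`). -/
def s (i : Fin 3) : BraidGroup4 := PresentedGroup.of i

lemma braid_rel_of_mem (r : FreeGroup (Fin 3)) (hr : r ∈ braidRels4) :
    PresentedGroup.mk braidRels4 r = 1 := by
  exact (QuotientGroup.eq_one_iff _).mpr (Subgroup.subset_normalClosure hr)

lemma braid1 : s 0 * s 1 * s 0 = s 1 * s 0 * s 1 := by
  have h := braid_rel_of_mem _ (by left; rfl)
  rw [map_mul, map_inv, mul_inv_eq_one] at h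
  simpa [s, PresentedGroup.of, map_mul] using h

lemma braid2 : s 1 * s 2 * s 1 = s 2 * s 1 * s 2 := by
  have h := braid_rel_of_mem _ (by right; left; rfl)
  rw [map_mul, map_inv, mul_inv_eq_one] at h
  simpa [s, PresentedGroup.of, map_mul] using h

lemma braid3 : s 0 * s 2 = s 2 * s 0 := by
  have h := braid_rel_of_mem _ (by right; right; rfl)
  rw [map_mul, map_inv, mul_inv_eq_one] at h
  simpa [s, PresentedGroup.of, map_mul] using h

/-- The assignment `g1 ↦ s1`, `g2 ↦ s2`, `g3 ↦ s2⁻¹·s3·s2` extends to a group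
homomorphism `G → Br₄`, and this homomorphism is surjective. -/
theorem stmt_4 :
    ∃ f : QuiverBraidGroup →* BraidGroup4,
      f (g 0) = s 0 ∧ f (g 1) = s 1 ∧ f (g 2) = (s 1)⁻¹ * s 2 * s 1 ∧
      Function.Surjective f := by
  set F : Fin 3 → BraidGroup4 := ![s 0, s 1, (s 1)⁻¹ * s 2 * s 1] with hF
  have key3 : (s 1)⁻¹ * s 2 * s 1 = s 2 * s 1 * (s 2)⁻¹ := by
    calc (s 1)⁻¹ * s 2 * s 1
        = (s 1)⁻¹ * (s 2 * s 1 * s 2) * (s 2)⁻¹ := by group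
      _ = (s 1)⁻¹ * (s 1 * s 2 * s 1) * (s 2)⁻¹ := by rw [← braid2]
      _ = s 2 * s 1 * (s 2)⁻¹ := by group
  have h : ∀ r ∈ quiverRels, FreeGroup.lift F r = 1 := by
    intro r hr
    rcases hr with h1 | h2 | h3 | h4
    · subst h1
      simp only [map_mul, map_inv, FreeGroup.lift_apply_of, hF]
      simp only [Matrix.cons_val_zero, Matrix.cons_val_one, Matrix.head_cons]
      rw [mul_inv_eq_one]
      exact braid1
    · subst h2
      simp only [map_mul, map_inv, FreeGroup.lift_apply_of, hF]
      simp only [Matrix.cons_val_zero, Matrix.cons_val_one, Matrix.head_cons,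
        Matrix.cons_val_two, Matrix.tail_cons]
      rw [mul_inv_eq_one, key3]
      -- s0 * (s2 s1 s2⁻¹) * s0 = (s2 s1 s2⁻¹) * s0 * (s2 s1 s2⁻¹)
      have lhs : s 0 * (s 2 * s 1 * (s 2)⁻¹) * s 0
          = s 2 * (s 1 * s 0 * s 1) * (s 2)⁻¹ := by
        have c1 : s 0 * s 2 = s 2 * s 0 := braid3
        have c2 : (s 2)⁻¹ * s 0 = s 0 * (s 2)⁻¹ := by
          rw [inv_mul_eq_iff_eq_mul, ← mul_assoc, ← braid3]; group
        calc s 0 * (s 2 * s 1 * (s 2)⁻¹) * s 0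
            = s 0 * s 2 * s 1 * ((s 2)⁻¹ * s 0) := by group
          _ = s 2 * s 0 * s 1 * (s 0 * (s 2)⁻¹) := by rw [c1, c2]
          _ = s 2 * (s 0 * s 1 * s 0) * (s 2)⁻¹ := by group
          _ = s 2 * (s 1 * s 0 * s 1) * (s 2)⁻¹ := by rw [braid1]
      have rhs : (s 2 * s 1 * (s 2)⁻¹) * s 0 * (s 2 * s 1 * (s 2)⁻¹)
          = s 2 * (s 1 * s 0 * s 1) * (s 2)⁻¹ := by
        have c2 : (s 2)⁻¹ * s 0 = s 0 * (s 2)⁻¹ := by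
          rw [inv_mul_eq_iff_eq_mul, ← mul_assoc, ← braid3]; group
        have c3 : (s 2)⁻¹ * (s 0 * s 2) = s 0 := by rw [braid3]; group
        calc (s 2 * s 1 * (s 2)⁻¹) * s 0 * (s 2 * s 1 * (s 2)⁻¹)
            = s 2 * s 1 * ((s 2)⁻¹ * (s 0 * s 2)) * s 1 * (s 2)⁻¹ := by group
          _ = s 2 * s 1 * s 0 * s 1 * (s 2)⁻¹ := by rw [c3]
          _ = s 2 * (s 1 * s 0 * s 1) * (s 2)⁻¹ := by group
      rw [lhs, rhs]
    · subst h3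
      simp only [map_mul, map_inv, FreeGroup.lift_apply_of, hF]
      simp only [Matrix.cons_val_one, Matrix.head_cons,
        Matrix.cons_val_two, Matrix.tail_cons]
      rw [mul_inv_eq_one]
      -- s1 (s1⁻¹ s2 s1) s1 = (s1⁻¹ s2 s1) s1 (s1⁻¹ s2 s1)
      calc s 1 * ((s 1)⁻¹ * s 2 * s 1) * s 1
          = s 2 * s 1 * s 1 := by group
        _ = (s 1)⁻¹ * (s 1 * s 2 * s 1) * s 1 := by group
        _ = (s 1)⁻¹ * (s 2 * s 1 * s 2) * s 1 := by rw [braid2]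
        _ = ((s 1)⁻¹ * s 2 * s 1) * s 1 * ((s 1)⁻¹ * s 2 * s 1) := by group
    · subst h4
      simp only [map_mul, map_inv, FreeGroup.lift_apply_of, hF]
      simp only [Matrix.cons_val_zero, Matrix.cons_val_one, Matrix.head_cons,
        Matrix.cons_val_two, Matrix.tail_cons]
      rw [mul_inv_eq_one]
      -- s0 s1 (s1⁻¹ s2 s1) s0 = s1 (s1⁻¹ s2 s1) s0 s1
      calc s 0 * s 1 * ((s 1)⁻¹ * s 2 * s 1) * s 0
          = s 0 * s 2 * (s 1 * s 0) := by group
        _ = s 2 * (s 0 * s 1 * s 0) := by rw [braid3]; group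
        _ = s 2 * (s 1 * s 0 * s 1) := by rw [braid1]
        _ = s 1 * ((s 1)⁻¹ * s 2 * s 1) * s 0 * s 1 := by group
  refine ⟨PresentedGroup.toGroup h, ?_, ?_, ?_, ?_⟩
  · simpa [g, hF] using PresentedGroup.toGroup.of h (x := (0 : Fin 3))
  · simpa [g, hF] using PresentedGroup.toGroup.of h (x := (1 : Fin 3))
  · simpa [g, hF] using PresentedGroup.toGroup.of h (x := (2 : Fin 3))
  · rw [← MonoidHom.range_eq_top]
    rw [eq_top_iff, ← PresentedGroup.closure_range_of braidRels4, Subgroup.closure_le]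
    rintro _ ⟨i, rfl⟩
    have h0 : s 0 ∈ (PresentedGroup.toGroup h).range :=
      ⟨g 0, by simpa [g, hF] using PresentedGroup.toGroup.of h (x := (0 : Fin 3))⟩
    have h1 : s 1 ∈ (PresentedGroup.toGroup h).range :=
      ⟨g 1, by simpa [g, hF] using PresentedGroup.toGroup.of h (x := (1 : Fin 3))⟩
    have h2' : (s 1)⁻¹ * s 2 * s 1 ∈ (PresentedGroup.toGroup h).range :=
      ⟨g 2, by simpa [g, hF] using PresentedGroup.toGroup.of h (x := (2 : Fin 3))⟩
    have h2 : s 2 ∈ (PresentedGroup.toGroup h).range := by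
      have : s 2 = s 1 * ((s 1)⁻¹ * s 2 * s 1) * (s 1)⁻¹ := by group
      rw [this]
      exact mul_mem (mul_mem h1 h2') (inv_mem h1)
    fin_cases i
    exacts [h0, h1, h2]
end
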